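/- arXiv:2408.14038 — 3 statements merged into one kernel-verified Lean document; each statement's English description precedes it below -/
import Mathlib

section
/- For the combined-sample jackknife pseudo-values V_l in the three-sample setting, the expectation satisfies: E[V_l] = θ·(n/(n−m))·[n − m − (n−1)(n1−m1)/n1] for 1 ≤ l ≤ n1, E[V_l] = θ·(n/(n−m))·[n − m − (n−1)(n2−m2)/n2] for n1 < l ≤ n1+n2, and E[V_l] = θ·(n/(n−m))·[n − m − (n−1)(n3−m3)/n3] for n1+n2 < l ≤ n. -/
open Finset MeasureTheory

/-- Three-sample U-statistic of degree `(m1, m2, m3)`, where `H A B C` denotes the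
symmetric kernel `h` evaluated at the sample observations indexed by the subsets
`A`, `B`, `C` of the three samples. -/
noncomputable def U3 {n1 n2 n3 : ℕ} (m1 m2 m3 : ℕ)
    (H : Finset (Fin n1) → Finset (Fin n2) → Finset (Fin n3) → ℝ) : ℝ :=
  ((n1.choose m1 * n2.choose m2 * n3.choose m3 : ℕ) : ℝ)⁻¹ *
    ∑ A ∈ powersetCard m1 (univ : Finset (Fin n1)),
      ∑ B ∈ powersetCard m2 (univ : Finset (Fin n2)),
        ∑ C ∈ powersetCard m3 (univ : Finset (Fin n3)), H A B C

/-- The three-sample U-statistic after deleting observation `X i` from the first sample. -/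
noncomputable def U3delX {n1 n2 n3 : ℕ} (m1 m2 m3 : ℕ)
    (H : Finset (Fin n1) → Finset (Fin n2) → Finset (Fin n3) → ℝ) (i : Fin n1) : ℝ :=
  (((n1 - 1).choose m1 * n2.choose m2 * n3.choose m3 : ℕ) : ℝ)⁻¹ *
    ∑ A ∈ powersetCard m1 ((univ : Finset (Fin n1)).erase i),
      ∑ B ∈ powersetCard m2 (univ : Finset (Fin n2)),
        ∑ C ∈ powersetCard m3 (univ : Finset (Fin n3)), H A B C


/-- The U-statistic after deleting observation `Y j` from the second sample. -/
noncomputable def U3delY {n1 n2 n3 : ℕ} (m1 m2 m3 : ℕ)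
    (H : Finset (Fin n1) → Finset (Fin n2) → Finset (Fin n3) → ℝ) (j : Fin n2) : ℝ :=
  ((n1.choose m1 * (n2 - 1).choose m2 * n3.choose m3 : ℕ) : ℝ)⁻¹ *
    ∑ A ∈ powersetCard m1 (univ : Finset (Fin n1)),
      ∑ B ∈ powersetCard m2 ((univ : Finset (Fin n2)).erase j),
        ∑ C ∈ powersetCard m3 (univ : Finset (Fin n3)), H A B C

/-- The U-statistic after deleting observation `Z k` from the third sample. -/
noncomputable def U3delZ {n1 n2 n3 : ℕ} (m1 m2 m3 : ℕ)
    (H : Finset (Fin n1) → Finset (Fin n2) → Finset (Fin n3) → ℝ) (k : Fin n3) : ℝ :=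
  ((n1.choose m1 * n2.choose m2 * (n3 - 1).choose m3 : ℕ) : ℝ)⁻¹ *
    ∑ A ∈ powersetCard m1 (univ : Finset (Fin n1)),
      ∑ B ∈ powersetCard m2 (univ : Finset (Fin n2)),
        ∑ C ∈ powersetCard m3 ((univ : Finset (Fin n3)).erase k), H A B C

/-- The combined-sample kernel `h̃` of degree `m = m1+m2+m3`: on a set `S` of indices of
the combined sample `W` (indexed by `Fin n1 ⊕ Fin n2 ⊕ Fin n3`), it equals
`c* · h(...)` when the indices of `S` split as `m1` X-indices, `m2` Y-indices and `m3`
Z-indices, and `0` otherwise, where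
`c* = C(n,m) / (C(n1,m1) C(n2,m2) C(n3,m3))`. -/
noncomputable def Kcomb {n1 n2 n3 : ℕ} (m1 m2 m3 : ℕ)
    (H : Finset (Fin n1) → Finset (Fin n2) → Finset (Fin n3) → ℝ)
    (S : Finset (Fin n1 ⊕ Fin n2 ⊕ Fin n3)) : ℝ :=
  let A : Finset (Fin n1) := univ.filter (fun i => Sum.inl i ∈ S)
  let B : Finset (Fin n2) := univ.filter (fun j => Sum.inr (Sum.inl j) ∈ S)
  let C : Finset (Fin n3) := univ.filter (fun k => Sum.inr (Sum.inr k) ∈ S)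
  if A.card = m1 ∧ B.card = m2 ∧ C.card = m3 then
    (((n1 + n2 + n3).choose (m1 + m2 + m3) : ℕ) : ℝ) /
        ((n1.choose m1 * n2.choose m2 * n3.choose m3 : ℕ) : ℝ) * H A B C
  else 0

/-- The one-sample U-statistic of degree `m = m1+m2+m3` based on the combined sample
`W = (X, Y, Z)` with kernel `h̃`. -/
noncomputable def U1comb {n1 n2 n3 : ℕ} (m1 m2 m3 : ℕ)
    (H : Finset (Fin n1) → Finset (Fin n2) → Finset (Fin n3) → ℝ) : ℝ :=
  (((n1 + n2 + n3).choose (m1 + m2 + m3) : ℕ) : ℝ)⁻¹ *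
    ∑ S ∈ powersetCard (m1 + m2 + m3)
        (univ : Finset (Fin n1 ⊕ Fin n2 ⊕ Fin n3)), Kcomb m1 m2 m3 H S

/-- The combined one-sample U-statistic after deleting observation `W l`. -/
noncomputable def U1combDel {n1 n2 n3 : ℕ} (m1 m2 m3 : ℕ)
    (H : Finset (Fin n1) → Finset (Fin n2) → Finset (Fin n3) → ℝ)
    (l : Fin n1 ⊕ Fin n2 ⊕ Fin n3) : ℝ :=
  (((n1 + n2 + n3 - 1).choose (m1 + m2 + m3) : ℕ) : ℝ)⁻¹ *
    ∑ S ∈ powersetCard (m1 + m2 + m3)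
        ((univ : Finset (Fin n1 ⊕ Fin n2 ⊕ Fin n3)).erase l), Kcomb m1 m2 m3 H S

namespace CombH
variable {n1 n2 n3 : ℕ}

def e1 : Fin n1 ↪ (Fin n1 ⊕ Fin n2 ⊕ Fin n3) := ⟨Sum.inl, fun a b h => by injection h⟩
def e2 : Fin n2 ↪ (Fin n1 ⊕ Fin n2 ⊕ Fin n3) :=
  ⟨fun j => Sum.inr (Sum.inl j), fun a b h => by injection h with h; injection h⟩
def e3 : Fin n3 ↪ (Fin n1 ⊕ Fin n2 ⊕ Fin n3) :=
  ⟨fun k => Sum.inr (Sum.inr k), fun a b h => by injection h with h; injection h⟩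

@[simp] lemma e1_apply (a : Fin n1) : (e1 : Fin n1 ↪ (Fin n1 ⊕ Fin n2 ⊕ Fin n3)) a = Sum.inl a := rfl
@[simp] lemma e2_apply (a : Fin n2) :
    (e2 : Fin n2 ↪ (Fin n1 ⊕ Fin n2 ⊕ Fin n3)) a = Sum.inr (Sum.inl a) := rfl
@[simp] lemma e3_apply (a : Fin n3) :
    (e3 : Fin n3 ↪ (Fin n1 ⊕ Fin n2 ⊕ Fin n3)) a = Sum.inr (Sum.inr a) := rfl

def fA (S : Finset (Fin n1 ⊕ Fin n2 ⊕ Fin n3)) : Finset (Fin n1) :=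
  univ.filter (fun i => Sum.inl i ∈ S)
def fB (S : Finset (Fin n1 ⊕ Fin n2 ⊕ Fin n3)) : Finset (Fin n2) :=
  univ.filter (fun j => Sum.inr (Sum.inl j) ∈ S)
def fC (S : Finset (Fin n1 ⊕ Fin n2 ⊕ Fin n3)) : Finset (Fin n3) :=
  univ.filter (fun k => Sum.inr (Sum.inr k) ∈ S)

lemma Kcomb_eq (m1 m2 m3 : ℕ) (H : Finset (Fin n1) → Finset (Fin n2) → Finset (Fin n3) → ℝ)
    (S : Finset (Fin n1 ⊕ Fin n2 ⊕ Fin n3)) :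
    Kcomb m1 m2 m3 H S =
      if (fA S).card = m1 ∧ (fB S).card = m2 ∧ (fC S).card = m3 then
        (((n1 + n2 + n3).choose (m1 + m2 + m3) : ℕ) : ℝ) /
          ((n1.choose m1 * n2.choose m2 * n3.choose m3 : ℕ) : ℝ) * H (fA S) (fB S) (fC S)
      else 0 := rfl

lemma union_f (S : Finset (Fin n1 ⊕ Fin n2 ⊕ Fin n3)) :
    (fA S).map e1 ∪ (fB S).map e2 ∪ (fC S).map e3 = S := by
  ext w; rcases w with i | j | k <;> simp [fA, fB, fC]

lemma fA_union (A : Finset (Fin n1)) (B : Finset (Fin n2)) (C : Finset (Fin n3)) :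
    fA (A.map e1 ∪ B.map e2 ∪ C.map e3) = A := by
  ext i; simp [fA]

lemma fB_union (A : Finset (Fin n1)) (B : Finset (Fin n2)) (C : Finset (Fin n3)) :
    fB (A.map e1 ∪ B.map e2 ∪ C.map e3) = B := by
  ext j; simp [fB]

lemma fC_union (A : Finset (Fin n1)) (B : Finset (Fin n2)) (C : Finset (Fin n3)) :
    fC (A.map e1 ∪ B.map e2 ∪ C.map e3) = C := by
  ext k; simp [fC]

lemma card_union3 (A : Finset (Fin n1)) (B : Finset (Fin n2)) (C : Finset (Fin n3)) :
    (A.map e1 ∪ B.map e2 ∪ C.map e3).card = A.card + B.card + C.card := by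
  rw [card_union_of_disjoint, card_union_of_disjoint, card_map, card_map, card_map]
  · simp [Finset.disjoint_left]
  · simp [Finset.disjoint_left]

lemma univ_eq :
    (univ : Finset (Fin n1 ⊕ Fin n2 ⊕ Fin n3)) =
      (univ : Finset (Fin n1)).map e1 ∪ (univ : Finset (Fin n2)).map e2 ∪
        (univ : Finset (Fin n3)).map e3 := by
  ext w; rcases w with i | j | k <;> simp

lemma erase_inl (i : Fin n1) :
    (univ : Finset (Fin n1 ⊕ Fin n2 ⊕ Fin n3)).erase (Sum.inl i) =
      ((univ : Finset (Fin n1)).erase i).map e1 ∪ (univ : Finset (Fin n2)).map e2 ∪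
        (univ : Finset (Fin n3)).map e3 := by
  ext w; rcases w with a | b | c <;> simp

lemma erase_inrl (j : Fin n2) :
    (univ : Finset (Fin n1 ⊕ Fin n2 ⊕ Fin n3)).erase (Sum.inr (Sum.inl j)) =
      (univ : Finset (Fin n1)).map e1 ∪ ((univ : Finset (Fin n2)).erase j).map e2 ∪
        (univ : Finset (Fin n3)).map e3 := by
  ext w; rcases w with a | b | c <;> simp

lemma erase_inrr (k : Fin n3) :
    (univ : Finset (Fin n1 ⊕ Fin n2 ⊕ Fin n3)).erase (Sum.inr (Sum.inr k)) =
      (univ : Finset (Fin n1)).map e1 ∪ (univ : Finset (Fin n2)).map e2 ∪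
        ((univ : Finset (Fin n3)).erase k).map e3 := by
  ext w; rcases w with a | b | c <;> simp

end CombH
namespace CombH
variable {n1 n2 n3 : ℕ}

lemma sum_Kcomb (m1 m2 m3 : ℕ) (H : Finset (Fin n1) → Finset (Fin n2) → Finset (Fin n3) → ℝ)
    (s1 : Finset (Fin n1)) (s2 : Finset (Fin n2)) (s3 : Finset (Fin n3)) :
    ∑ S ∈ powersetCard (m1 + m2 + m3) (s1.map e1 ∪ s2.map e2 ∪ s3.map e3),
        Kcomb m1 m2 m3 H S =
      ∑ A ∈ powersetCard m1 s1, ∑ B ∈ powersetCard m2 s2, ∑ C ∈ powersetCard m3 s3,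
        (((n1 + n2 + n3).choose (m1 + m2 + m3) : ℕ) : ℝ) /
          ((n1.choose m1 * n2.choose m2 * n3.choose m3 : ℕ) : ℝ) * H A B C := by
  classical
  rw [← Finset.sum_filter_of_ne (p := fun S => (fA S).card = m1 ∧ (fB S).card = m2 ∧
      (fC S).card = m3) (by
        intro S _ hne
        by_contra hP
        exact hne (by rw [Kcomb_eq, if_neg hP]))]
  rw [show (∑ A ∈ powersetCard m1 s1, ∑ B ∈ powersetCard m2 s2, ∑ C ∈ powersetCard m3 s3,
        (((n1 + n2 + n3).choose (m1 + m2 + m3) : ℕ) : ℝ) /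
          ((n1.choose m1 * n2.choose m2 * n3.choose m3 : ℕ) : ℝ) * H A B C) =
      ∑ p ∈ powersetCard m1 s1 ×ˢ (powersetCard m2 s2 ×ˢ powersetCard m3 s3),
        (((n1 + n2 + n3).choose (m1 + m2 + m3) : ℕ) : ℝ) /
          ((n1.choose m1 * n2.choose m2 * n3.choose m3 : ℕ) : ℝ) * H p.1 p.2.1 p.2.2 by
    rw [Finset.sum_product]; exact Finset.sum_congr rfl fun A _ => by rw [Finset.sum_product]]
  refine Finset.sum_nbij' (fun S => (fA S, fB S, fC S))
    (fun p => p.1.map e1 ∪ p.2.1.map e2 ∪ p.2.2.map e3) ?_ ?_ ?_ ?_ ?_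
  · intro S hS
    simp only [Finset.mem_filter, Finset.mem_powersetCard] at hS
    obtain ⟨⟨hsub, _⟩, hA, hB, hC⟩ := hS
    simp only [Finset.mem_product, Finset.mem_powersetCard]
    refine ⟨⟨?_, hA⟩, ⟨?_, hB⟩, ⟨?_, hC⟩⟩
    · intro x hx
      have : Sum.inl x ∈ s1.map e1 ∪ s2.map e2 ∪ s3.map e3 := hsub (by simpa [fA] using hx)
      simpa using this
    · intro x hx
      have : Sum.inr (Sum.inl x) ∈ s1.map e1 ∪ s2.map e2 ∪ s3.map e3 :=
        hsub (by simpa [fB] using hx)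
      simpa using this
    · intro x hx
      have : Sum.inr (Sum.inr x) ∈ s1.map e1 ∪ s2.map e2 ∪ s3.map e3 :=
        hsub (by simpa [fC] using hx)
      simpa using this
  · intro p hp
    simp only [Finset.mem_product, Finset.mem_powersetCard] at hp
    obtain ⟨⟨hA, hcA⟩, ⟨hB, hcB⟩, hC, hcC⟩ := hp
    simp only [Finset.mem_filter, Finset.mem_powersetCard]
    refine ⟨⟨?_, ?_⟩, ?_, ?_, ?_⟩
    · exact Finset.union_subset_union (Finset.union_subset_union
        (Finset.map_subset_map.2 hA) (Finset.map_subset_map.2 hB)) (Finset.map_subset_map.2 hC)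
    · rw [card_union3, hcA, hcB, hcC]
    · rw [fA_union, hcA]
    · rw [fB_union, hcB]
    · rw [fC_union, hcC]
  · intro S _; exact union_f S
  · intro p _
    simp only [fA_union, fB_union, fC_union]
  · intro S hS
    simp only [Finset.mem_filter] at hS
    rw [Kcomb_eq, if_pos hS.2]

end CombH
namespace CombH
variable {n1 n2 n3 : ℕ}

lemma nat_choose_id (N M : ℕ) (h : 1 ≤ N) :
    N * (N - 1).choose M = N.choose M * (N - M) := by
  obtain ⟨n, rfl⟩ : ∃ n, N = n + 1 := ⟨N - 1, (Nat.succ_pred_eq_of_pos h).symm⟩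
  simp only [Nat.add_sub_cancel]
  rw [Nat.add_one_mul_choose_eq, Nat.choose_succ_right_eq]

variable {Ω : Type*} [MeasurableSpace Ω] (μ : Measure Ω) [IsProbabilityMeasure μ]

lemma key_integral (m1 m2 m3 : ℕ)
    (H : Finset (Fin n1) → Finset (Fin n2) → Finset (Fin n3) → Ω → ℝ) (θ : ℝ)
    (hHint : ∀ A B C, A.card = m1 → B.card = m2 → C.card = m3 → Integrable (H A B C) μ)
    (hHmean : ∀ A B C, A.card = m1 → B.card = m2 → C.card = m3 → ∫ ω, H A B C ω ∂μ = θ)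
    (s1 : Finset (Fin n1)) (s2 : Finset (Fin n2)) (s3 : Finset (Fin n3)) :
    Integrable (fun ω => ∑ S ∈ powersetCard (m1 + m2 + m3) (s1.map e1 ∪ s2.map e2 ∪ s3.map e3),
        Kcomb m1 m2 m3 (fun A B C => H A B C ω) S) μ ∧
    ∫ ω, (∑ S ∈ powersetCard (m1 + m2 + m3) (s1.map e1 ∪ s2.map e2 ∪ s3.map e3),
        Kcomb m1 m2 m3 (fun A B C => H A B C ω) S) ∂μ =
      ((s1.card.choose m1 * s2.card.choose m2 * s3.card.choose m3 : ℕ) : ℝ) *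
        ((((n1 + n2 + n3).choose (m1 + m2 + m3) : ℕ) : ℝ) /
          ((n1.choose m1 * n2.choose m2 * n3.choose m3 : ℕ) : ℝ) * θ) := by
  classical
  set c : ℝ := (((n1 + n2 + n3).choose (m1 + m2 + m3) : ℕ) : ℝ) /
      ((n1.choose m1 * n2.choose m2 * n3.choose m3 : ℕ) : ℝ) with hc
  have hint : ∀ A ∈ powersetCard m1 s1, ∀ B ∈ powersetCard m2 s2, ∀ C ∈ powersetCard m3 s3,
      Integrable (fun ω => c * H A B C ω) μ := by
    intro A hA B hB C hC
    simp only [Finset.mem_powersetCard] at hA hB hC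
    exact (hHint A B C hA.2 hB.2 hC.2).const_mul c
  have hrw : ∀ ω, (∑ S ∈ powersetCard (m1 + m2 + m3) (s1.map e1 ∪ s2.map e2 ∪ s3.map e3),
      Kcomb m1 m2 m3 (fun A B C => H A B C ω) S) =
      ∑ A ∈ powersetCard m1 s1, ∑ B ∈ powersetCard m2 s2, ∑ C ∈ powersetCard m3 s3,
        c * H A B C ω := fun ω => sum_Kcomb m1 m2 m3 _ s1 s2 s3
  have hint2 : Integrable (fun ω => ∑ A ∈ powersetCard m1 s1, ∑ B ∈ powersetCard m2 s2,
      ∑ C ∈ powersetCard m3 s3, c * H A B C ω) μ := by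
    apply integrable_finset_sum; intro A hA
    apply integrable_finset_sum; intro B hB
    apply integrable_finset_sum; intro C hC
    exact hint A hA B hB C hC
  constructor
  · exact hint2.congr (by filter_upwards with ω using (hrw ω).symm)
  · rw [integral_congr_ae (by filter_upwards with ω using hrw ω)]
    rw [integral_finset_sum _ (fun A hA => integrable_finset_sum _ (fun B hB =>
      integrable_finset_sum _ (fun C hC => hint A hA B hB C hC)))]
    have : ∀ A ∈ powersetCard m1 s1,
        (∫ ω, ∑ B ∈ powersetCard m2 s2, ∑ C ∈ powersetCard m3 s3, c * H A B C ω ∂μ) =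
        ((s2.card.choose m2 * s3.card.choose m3 : ℕ) : ℝ) * (c * θ) := by
      intro A hA
      rw [integral_finset_sum _ (fun B hB =>
        integrable_finset_sum _ (fun C hC => hint A hA B hB C hC))]
      have : ∀ B ∈ powersetCard m2 s2,
          (∫ ω, ∑ C ∈ powersetCard m3 s3, c * H A B C ω ∂μ) =
          ((s3.card.choose m3 : ℕ) : ℝ) * (c * θ) := by
        intro B hB
        rw [integral_finset_sum _ (fun C hC => hint A hA B hB C hC)]
        have : ∀ C ∈ powersetCard m3 s3, (∫ ω, c * H A B C ω ∂μ) = c * θ := by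
          intro C hC
          simp only [Finset.mem_powersetCard] at hA hB hC
          rw [MeasureTheory.integral_const_mul, hHmean A B C hA.2 hB.2 hC.2]
        rw [Finset.sum_congr rfl this, Finset.sum_const, Finset.card_powersetCard,
          nsmul_eq_mul]
      rw [Finset.sum_congr rfl this, Finset.sum_const, Finset.card_powersetCard, nsmul_eq_mul]
      push_cast; ring
    rw [Finset.sum_congr rfl this, Finset.sum_const, Finset.card_powersetCard, nsmul_eq_mul]
    push_cast; ring

end CombH
namespace CombH

lemma arith (Nr Mr njr mjr a a' b b' q θ : ℝ)
    (ha : a ≠ 0) (ha' : a' ≠ 0) (hb : b ≠ 0) (hq : q ≠ 0) (hnj : njr ≠ 0)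
    (hNM : Nr - Mr ≠ 0) (hN : Nr ≠ 0)
    (ida : a' * Nr = a * (Nr - Mr)) (idb : b' * njr = b * (njr - mjr)) :
    Nr * (a⁻¹ * (b * q * (a / (b * q) * θ))) -
      (Nr - 1) * (a'⁻¹ * (b' * q * (a / (b * q) * θ))) =
    θ * (Nr / (Nr - Mr)) * ((Nr - Mr) - ((Nr - 1) * (njr - mjr)) / njr) := by
  have hb' : b' = b * (njr - mjr) / njr := by
    rw [eq_div_iff hnj]; linarith
  have ha2 : a' = a * (Nr - Mr) / Nr := by
    rw [eq_div_iff hN]; linarith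
  rw [hb', ha2]
  field_simp

end CombH

/-- Expectation of the combined-sample jackknife pseudo-values in the three-sample
setting: with `n = n1+n2+n3`, `m = m1+m2+m3`, combined pseudo-values
`V_l = n U_n - (n-1) U^{(-l)}_{n-1}` built from the combined kernel `h̃`, and kernel `h`
(evaluated at sample subsets as the random variables `H A B C`) having mean `θ` on every
admissible index subset triple, one has
`E[V_l] = θ (n/(n-m)) [n - m - (n-1)(n_j - m_j)/n_j]` for `l` in the `j`-th block. -/
theorem expectation_combined_pseudo_values {Ω : Type*} [MeasurableSpace Ω]
    (μ : Measure Ω) [IsProbabilityMeasure μ]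
    {n1 n2 n3 m1 m2 m3 : ℕ}
    (h1 : m1 < n1) (h2 : m2 < n2) (h3 : m3 < n3)
    (hm1 : 1 ≤ m1) (hm2 : 1 ≤ m2) (hm3 : 1 ≤ m3)
    (hmn : m1 + m2 + m3 < n1 + n2 + n3)
    (H : Finset (Fin n1) → Finset (Fin n2) → Finset (Fin n3) → Ω → ℝ)
    (θ : ℝ)
    (hHint : ∀ A B C, A.card = m1 → B.card = m2 → C.card = m3 →
      Integrable (H A B C) μ)
    (hHmean : ∀ A B C, A.card = m1 → B.card = m2 → C.card = m3 →
      ∫ ω, H A B C ω ∂μ = θ) :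
    (∀ i : Fin n1,
      ∫ ω, (((n1 + n2 + n3 : ℕ) : ℝ) * U1comb m1 m2 m3 (fun A B C => H A B C ω) -
          (((n1 + n2 + n3 : ℕ) : ℝ) - 1) *
            U1combDel m1 m2 m3 (fun A B C => H A B C ω) (Sum.inl i)) ∂μ =
        θ * (((n1 + n2 + n3 : ℕ) : ℝ) /
              (((n1 + n2 + n3 : ℕ) : ℝ) - ((m1 + m2 + m3 : ℕ) : ℝ))) *
            ((((n1 + n2 + n3 : ℕ) : ℝ) - ((m1 + m2 + m3 : ℕ) : ℝ)) -
              ((((n1 + n2 + n3 : ℕ) : ℝ) - 1) * ((n1 : ℝ) - (m1 : ℝ))) / (n1 : ℝ))) ∧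
    (∀ j : Fin n2,
      ∫ ω, (((n1 + n2 + n3 : ℕ) : ℝ) * U1comb m1 m2 m3 (fun A B C => H A B C ω) -
          (((n1 + n2 + n3 : ℕ) : ℝ) - 1) *
            U1combDel m1 m2 m3 (fun A B C => H A B C ω) (Sum.inr (Sum.inl j))) ∂μ =
        θ * (((n1 + n2 + n3 : ℕ) : ℝ) /
              (((n1 + n2 + n3 : ℕ) : ℝ) - ((m1 + m2 + m3 : ℕ) : ℝ))) *
            ((((n1 + n2 + n3 : ℕ) : ℝ) - ((m1 + m2 + m3 : ℕ) : ℝ)) -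
              ((((n1 + n2 + n3 : ℕ) : ℝ) - 1) * ((n2 : ℝ) - (m2 : ℝ))) / (n2 : ℝ))) ∧
    (∀ k : Fin n3,
      ∫ ω, (((n1 + n2 + n3 : ℕ) : ℝ) * U1comb m1 m2 m3 (fun A B C => H A B C ω) -
          (((n1 + n2 + n3 : ℕ) : ℝ) - 1) *
            U1combDel m1 m2 m3 (fun A B C => H A B C ω) (Sum.inr (Sum.inr k))) ∂μ =
        θ * (((n1 + n2 + n3 : ℕ) : ℝ) /
              (((n1 + n2 + n3 : ℕ) : ℝ) - ((m1 + m2 + m3 : ℕ) : ℝ))) *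
            ((((n1 + n2 + n3 : ℕ) : ℝ) - ((m1 + m2 + m3 : ℕ) : ℝ)) -
              ((((n1 + n2 + n3 : ℕ) : ℝ) - 1) * ((n3 : ℝ) - (m3 : ℝ))) / (n3 : ℝ))) := by
  classical
  refine ⟨?_, ?_, ?_⟩
  · intro i
    have hfull := CombH.key_integral μ m1 m2 m3 H θ hHint hHmean
      (univ : Finset (Fin n1)) univ univ
    rw [← CombH.univ_eq] at hfull
    have hdel := CombH.key_integral μ m1 m2 m3 H θ hHint hHmean
      ((univ : Finset (Fin n1)).erase i) univ univ
    rw [← CombH.erase_inl] at hdel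
    simp only [card_univ, Fintype.card_fin, Finset.card_erase_of_mem (mem_univ i)] at hfull hdel
    simp only [U1comb, U1combDel]
    have hint1 : Integrable (fun ω => ((n1 + n2 + n3 : ℕ) : ℝ) *
        ((((n1 + n2 + n3).choose (m1 + m2 + m3) : ℕ) : ℝ)⁻¹ *
          ∑ S ∈ powersetCard (m1 + m2 + m3) (univ : Finset (Fin n1 ⊕ Fin n2 ⊕ Fin n3)),
            Kcomb m1 m2 m3 (fun A B C => H A B C ω) S)) μ :=
      (hfull.1.const_mul _).const_mul _
    have hint2 : Integrable (fun ω => (((n1 + n2 + n3 : ℕ) : ℝ) - 1) *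
        ((((n1 + n2 + n3 - 1).choose (m1 + m2 + m3) : ℕ) : ℝ)⁻¹ *
          ∑ S ∈ powersetCard (m1 + m2 + m3)
              ((univ : Finset (Fin n1 ⊕ Fin n2 ⊕ Fin n3)).erase (Sum.inl i)),
            Kcomb m1 m2 m3 (fun A B C => H A B C ω) S)) μ :=
      (hdel.1.const_mul _).const_mul _
    rw [integral_sub hint1 hint2]
    simp only [integral_const_mul]
    rw [hfull.2, hdel.2]
    -- now pure arithmetic
    have hN1 : 1 ≤ n1 + n2 + n3 := by omega
    have ida : ((((n1 + n2 + n3) - 1).choose (m1 + m2 + m3) : ℕ) : ℝ) *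
        ((n1 : ℝ) + n2 + n3) =
        (((n1 + n2 + n3).choose (m1 + m2 + m3) : ℕ) : ℝ) *
          (((n1 : ℝ) + n2 + n3) - ((m1 : ℝ) + m2 + m3)) := by
      have h := congrArg (Nat.cast (R := ℝ)) (CombH.nat_choose_id (n1 + n2 + n3) (m1 + m2 + m3) hN1)
      push_cast [Nat.cast_sub hmn.le] at h
      linear_combination h
    have idb : (((n1 - 1).choose m1 : ℕ) : ℝ) * (n1 : ℝ) =
        ((n1.choose m1 : ℕ) : ℝ) * ((n1 : ℝ) - (m1 : ℝ)) := by
      have h := congrArg (Nat.cast (R := ℝ)) (CombH.nat_choose_id n1 m1 (by omega))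
      push_cast [Nat.cast_sub h1.le] at h
      linear_combination h
    have ha : (((n1 + n2 + n3).choose (m1 + m2 + m3) : ℕ) : ℝ) ≠ 0 := by
      exact_mod_cast (Nat.choose_pos hmn.le).ne'
    have ha' : ((((n1 + n2 + n3) - 1).choose (m1 + m2 + m3) : ℕ) : ℝ) ≠ 0 := by
      exact_mod_cast (Nat.choose_pos (by omega)).ne'
    have hb : ((n1.choose m1 : ℕ) : ℝ) ≠ 0 := by exact_mod_cast (Nat.choose_pos h1.le).ne'
    have hq : ((n2.choose m2 : ℕ) : ℝ) * ((n3.choose m3 : ℕ) : ℝ) ≠ 0 :=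
      mul_ne_zero (by exact_mod_cast (Nat.choose_pos h2.le).ne')
        (by exact_mod_cast (Nat.choose_pos h3.le).ne')
    have hnj : (n1 : ℝ) ≠ 0 := by
      exact_mod_cast (Nat.pos_of_ne_zero (by omega)).ne'
    have hN : ((n1 : ℝ) + n2 + n3) ≠ 0 := by
      have : (0:ℝ) < (n1 : ℝ) + n2 + n3 := by exact_mod_cast (show 0 < n1+n2+n3 by omega)
      exact this.ne'
    have hNM : ((n1 : ℝ) + n2 + n3) - ((m1 : ℝ) + m2 + m3) ≠ 0 := by
      have : ((m1 : ℝ) + m2 + m3) < ((n1 : ℝ) + n2 + n3) := by exact_mod_cast hmn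
      linarith
    push_cast
    linear_combination CombH.arith ((n1 : ℝ) + n2 + n3) ((m1 : ℝ) + m2 + m3) (n1 : ℝ) (m1 : ℝ)
      (((n1 + n2 + n3).choose (m1 + m2 + m3) : ℕ) : ℝ)
      ((((n1 + n2 + n3) - 1).choose (m1 + m2 + m3) : ℕ) : ℝ)
      ((n1.choose m1 : ℕ) : ℝ) (((n1 - 1).choose m1 : ℕ) : ℝ)
      (((n2.choose m2 : ℕ) : ℝ) * ((n3.choose m3 : ℕ) : ℝ)) θ
      ha ha' hb hq hnj hNM hN ida idb
  · intro j
    have hfull := CombH.key_integral μ m1 m2 m3 H θ hHint hHmean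
      (univ : Finset (Fin n1)) univ univ
    rw [← CombH.univ_eq] at hfull
    have hdel := CombH.key_integral μ m1 m2 m3 H θ hHint hHmean
      univ ((univ : Finset (Fin n2)).erase j) univ
    rw [← CombH.erase_inrl] at hdel
    simp only [card_univ, Fintype.card_fin, Finset.card_erase_of_mem (mem_univ j)] at hfull hdel
    simp only [U1comb, U1combDel]
    have hint1 : Integrable (fun ω => ((n1 + n2 + n3 : ℕ) : ℝ) *
        ((((n1 + n2 + n3).choose (m1 + m2 + m3) : ℕ) : ℝ)⁻¹ *
          ∑ S ∈ powersetCard (m1 + m2 + m3) (univ : Finset (Fin n1 ⊕ Fin n2 ⊕ Fin n3)),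
            Kcomb m1 m2 m3 (fun A B C => H A B C ω) S)) μ :=
      (hfull.1.const_mul _).const_mul _
    have hint2 : Integrable (fun ω => (((n1 + n2 + n3 : ℕ) : ℝ) - 1) *
        ((((n1 + n2 + n3 - 1).choose (m1 + m2 + m3) : ℕ) : ℝ)⁻¹ *
          ∑ S ∈ powersetCard (m1 + m2 + m3)
              ((univ : Finset (Fin n1 ⊕ Fin n2 ⊕ Fin n3)).erase (Sum.inr (Sum.inl j))),
            Kcomb m1 m2 m3 (fun A B C => H A B C ω) S)) μ :=
      (hdel.1.const_mul _).const_mul _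
    rw [integral_sub hint1 hint2]
    simp only [integral_const_mul]
    rw [hfull.2, hdel.2]
    -- now pure arithmetic
    have hN1 : 1 ≤ n1 + n2 + n3 := by omega
    have ida : ((((n1 + n2 + n3) - 1).choose (m1 + m2 + m3) : ℕ) : ℝ) *
        ((n1 : ℝ) + n2 + n3) =
        (((n1 + n2 + n3).choose (m1 + m2 + m3) : ℕ) : ℝ) *
          (((n1 : ℝ) + n2 + n3) - ((m1 : ℝ) + m2 + m3)) := by
      have h := congrArg (Nat.cast (R := ℝ)) (CombH.nat_choose_id (n1 + n2 + n3) (m1 + m2 + m3) hN1)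
      push_cast [Nat.cast_sub hmn.le] at h
      linear_combination h
    have idb : (((n2 - 1).choose m2 : ℕ) : ℝ) * (n2 : ℝ) =
        ((n2.choose m2 : ℕ) : ℝ) * ((n2 : ℝ) - (m2 : ℝ)) := by
      have h := congrArg (Nat.cast (R := ℝ)) (CombH.nat_choose_id n2 m2 (by omega))
      push_cast [Nat.cast_sub h2.le] at h
      linear_combination h
    have ha : (((n1 + n2 + n3).choose (m1 + m2 + m3) : ℕ) : ℝ) ≠ 0 := by
      exact_mod_cast (Nat.choose_pos hmn.le).ne'
    have ha' : ((((n1 + n2 + n3) - 1).choose (m1 + m2 + m3) : ℕ) : ℝ) ≠ 0 := by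
      exact_mod_cast (Nat.choose_pos (by omega)).ne'
    have hb : ((n2.choose m2 : ℕ) : ℝ) ≠ 0 := by exact_mod_cast (Nat.choose_pos h2.le).ne'
    have hq : ((n1.choose m1 : ℕ) : ℝ) * ((n3.choose m3 : ℕ) : ℝ) ≠ 0 :=
      mul_ne_zero (by exact_mod_cast (Nat.choose_pos h1.le).ne')
        (by exact_mod_cast (Nat.choose_pos h3.le).ne')
    have hnj : (n2 : ℝ) ≠ 0 := by
      exact_mod_cast (Nat.pos_of_ne_zero (by omega)).ne'
    have hN : ((n1 : ℝ) + n2 + n3) ≠ 0 := by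
      have : (0:ℝ) < (n1 : ℝ) + n2 + n3 := by exact_mod_cast (show 0 < n1+n2+n3 by omega)
      exact this.ne'
    have hNM : ((n1 : ℝ) + n2 + n3) - ((m1 : ℝ) + m2 + m3) ≠ 0 := by
      have : ((m1 : ℝ) + m2 + m3) < ((n1 : ℝ) + n2 + n3) := by exact_mod_cast hmn
      linarith
    push_cast
    linear_combination CombH.arith ((n1 : ℝ) + n2 + n3) ((m1 : ℝ) + m2 + m3) (n2 : ℝ) (m2 : ℝ)
      (((n1 + n2 + n3).choose (m1 + m2 + m3) : ℕ) : ℝ)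
      ((((n1 + n2 + n3) - 1).choose (m1 + m2 + m3) : ℕ) : ℝ)
      ((n2.choose m2 : ℕ) : ℝ) (((n2 - 1).choose m2 : ℕ) : ℝ)
      (((n1.choose m1 : ℕ) : ℝ) * ((n3.choose m3 : ℕ) : ℝ)) θ
      ha ha' hb hq hnj hNM hN ida idb
  · intro k
    have hfull := CombH.key_integral μ m1 m2 m3 H θ hHint hHmean
      (univ : Finset (Fin n1)) univ univ
    rw [← CombH.univ_eq] at hfull
    have hdel := CombH.key_integral μ m1 m2 m3 H θ hHint hHmean
      univ univ ((univ : Finset (Fin n3)).erase k)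
    rw [← CombH.erase_inrr] at hdel
    simp only [card_univ, Fintype.card_fin, Finset.card_erase_of_mem (mem_univ k)] at hfull hdel
    simp only [U1comb, U1combDel]
    have hint1 : Integrable (fun ω => ((n1 + n2 + n3 : ℕ) : ℝ) *
        ((((n1 + n2 + n3).choose (m1 + m2 + m3) : ℕ) : ℝ)⁻¹ *
          ∑ S ∈ powersetCard (m1 + m2 + m3) (univ : Finset (Fin n1 ⊕ Fin n2 ⊕ Fin n3)),
            Kcomb m1 m2 m3 (fun A B C => H A B C ω) S)) μ :=
      (hfull.1.const_mul _).const_mul _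
    have hint2 : Integrable (fun ω => (((n1 + n2 + n3 : ℕ) : ℝ) - 1) *
        ((((n1 + n2 + n3 - 1).choose (m1 + m2 + m3) : ℕ) : ℝ)⁻¹ *
          ∑ S ∈ powersetCard (m1 + m2 + m3)
              ((univ : Finset (Fin n1 ⊕ Fin n2 ⊕ Fin n3)).erase (Sum.inr (Sum.inr k))),
            Kcomb m1 m2 m3 (fun A B C => H A B C ω) S)) μ :=
      (hdel.1.const_mul _).const_mul _
    rw [integral_sub hint1 hint2]
    simp only [integral_const_mul]
    rw [hfull.2, hdel.2]
    -- now pure arithmetic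
    have hN1 : 1 ≤ n1 + n2 + n3 := by omega
    have ida : ((((n1 + n2 + n3) - 1).choose (m1 + m2 + m3) : ℕ) : ℝ) *
        ((n1 : ℝ) + n2 + n3) =
        (((n1 + n2 + n3).choose (m1 + m2 + m3) : ℕ) : ℝ) *
          (((n1 : ℝ) + n2 + n3) - ((m1 : ℝ) + m2 + m3)) := by
      have h := congrArg (Nat.cast (R := ℝ)) (CombH.nat_choose_id (n1 + n2 + n3) (m1 + m2 + m3) hN1)
      push_cast [Nat.cast_sub hmn.le] at h
      linear_combination h
    have idb : (((n3 - 1).choose m3 : ℕ) : ℝ) * (n3 : ℝ) =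
        ((n3.choose m3 : ℕ) : ℝ) * ((n3 : ℝ) - (m3 : ℝ)) := by
      have h := congrArg (Nat.cast (R := ℝ)) (CombH.nat_choose_id n3 m3 (by omega))
      push_cast [Nat.cast_sub h3.le] at h
      linear_combination h
    have ha : (((n1 + n2 + n3).choose (m1 + m2 + m3) : ℕ) : ℝ) ≠ 0 := by
      exact_mod_cast (Nat.choose_pos hmn.le).ne'
    have ha' : ((((n1 + n2 + n3) - 1).choose (m1 + m2 + m3) : ℕ) : ℝ) ≠ 0 := by
      exact_mod_cast (Nat.choose_pos (by omega)).ne'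
    have hb : ((n3.choose m3 : ℕ) : ℝ) ≠ 0 := by exact_mod_cast (Nat.choose_pos h3.le).ne'
    have hq : ((n1.choose m1 : ℕ) : ℝ) * ((n2.choose m2 : ℕ) : ℝ) ≠ 0 :=
      mul_ne_zero (by exact_mod_cast (Nat.choose_pos h1.le).ne')
        (by exact_mod_cast (Nat.choose_pos h2.le).ne')
    have hnj : (n3 : ℝ) ≠ 0 := by
      exact_mod_cast (Nat.pos_of_ne_zero (by omega)).ne'
    have hN : ((n1 : ℝ) + n2 + n3) ≠ 0 := by
      have : (0:ℝ) < (n1 : ℝ) + n2 + n3 := by exact_mod_cast (show 0 < n1+n2+n3 by omega)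
      exact this.ne'
    have hNM : ((n1 : ℝ) + n2 + n3) - ((m1 : ℝ) + m2 + m3) ≠ 0 := by
      have : ((m1 : ℝ) + m2 + m3) < ((n1 : ℝ) + n2 + n3) := by exact_mod_cast hmn
      linarith
    push_cast
    linear_combination CombH.arith ((n1 : ℝ) + n2 + n3) ((m1 : ℝ) + m2 + m3) (n3 : ℝ) (m3 : ℝ)
      (((n1 + n2 + n3).choose (m1 + m2 + m3) : ℕ) : ℝ)
      ((((n1 + n2 + n3) - 1).choose (m1 + m2 + m3) : ℕ) : ℝ)
      ((n3.choose m3 : ℕ) : ℝ) (((n3 - 1).choose m3 : ℕ) : ℝ)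
      (((n1.choose m1 : ℕ) : ℝ) * ((n2.choose m2 : ℕ) : ℝ)) θ
      ha ha' hb hq hnj hNM hN ida idb
end

section
/- Decomposition of centered combined pseudo-values in the X-block: for 1 ≤ l ≤ n1, V_l − E[V_l] = [n(n−1)(n1−m1)]/[n1(n−m)(n1−1)]·(V_{l,0,0} − U_n) + (n/(n−m))·[n − m − (n−1)(n1−m1)/n1]·(U_n − θ). -/
open Finset

section AuxPseudo

variable {n1 n2 n3 : ℕ} {m1 m2 m3 : ℕ}

private lemma key (H : Finset (Fin n1) → Finset (Fin n2) → Finset (Fin n3) → ℝ) (s1 : Finset (Fin n1)) :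
    ∑ S ∈ powersetCard (m1 + m2 + m3)
      (s1.disjSum ((univ : Finset (Fin n2)).disjSum (univ : Finset (Fin n3)))),
        Kcomb m1 m2 m3 H S
    = (((n1 + n2 + n3).choose (m1 + m2 + m3) : ℕ) : ℝ) /
        ((n1.choose m1 * n2.choose m2 * n3.choose m3 : ℕ) : ℝ) *
      ∑ A ∈ powersetCard m1 s1, ∑ B ∈ powersetCard m2 (univ : Finset (Fin n2)),
        ∑ C ∈ powersetCard m3 (univ : Finset (Fin n3)), H A B C := by
  classical
  set c : ℝ := (((n1 + n2 + n3).choose (m1 + m2 + m3) : ℕ) : ℝ) /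
      ((n1.choose m1 * n2.choose m2 * n3.choose m3 : ℕ) : ℝ) with hc
  have hfilts : ∀ S : Finset (Fin n1 ⊕ Fin n2 ⊕ Fin n3),
      (univ.filter (fun i => Sum.inl i ∈ S) = S.toLeft) ∧
      (univ.filter (fun j => Sum.inr (Sum.inl j) ∈ S) = S.toRight.toLeft) ∧
      (univ.filter (fun k => Sum.inr (Sum.inr k) ∈ S) = S.toRight.toRight) := by
    intro S
    refine ⟨?_, ?_, ?_⟩ <;> ext x <;> simp
  have hK : ∀ S : Finset (Fin n1 ⊕ Fin n2 ⊕ Fin n3),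
      Kcomb m1 m2 m3 H S =
        if S.toLeft.card = m1 ∧ S.toRight.toLeft.card = m2 ∧ S.toRight.toRight.card = m3
        then c * H S.toLeft S.toRight.toLeft S.toRight.toRight else 0 := by
    intro S
    obtain ⟨h1, h2, h3⟩ := hfilts S
    simp only [Kcomb, h1, h2, h3, hc]
  simp only [hK]
  rw [← Finset.sum_filter]
  have hprod : c * ∑ A ∈ powersetCard m1 s1, ∑ B ∈ powersetCard m2 (univ : Finset (Fin n2)),
        ∑ C ∈ powersetCard m3 (univ : Finset (Fin n3)), H A B C
      = ∑ x ∈ (powersetCard m1 s1) ×ˢ ((powersetCard m2 (univ : Finset (Fin n2))) ×ˢ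
          (powersetCard m3 (univ : Finset (Fin n3)))), c * H x.1 x.2.1 x.2.2 := by
    rw [Finset.sum_product]
    simp only [Finset.sum_product]
    rw [Finset.mul_sum]
    congr 1; ext A
    rw [Finset.mul_sum]
    congr 1; ext B
    rw [Finset.mul_sum]
  rw [hprod]
  refine Finset.sum_nbij' (i := fun S => (S.toLeft, S.toRight.toLeft, S.toRight.toRight))
    (j := fun x => x.1.disjSum (x.2.1.disjSum x.2.2)) ?_ ?_ ?_ ?_ ?_
  · intro S hS
    simp only [Finset.mem_filter, Finset.mem_powersetCard] at hS
    obtain ⟨⟨hsub, _⟩, hc1, hc2, hc3⟩ := hS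
    simp only [Finset.mem_product, Finset.mem_powersetCard]
    refine ⟨⟨?_, hc1⟩, ⟨?_, hc2⟩, ⟨?_, hc3⟩⟩
    · intro a ha
      simp only [Finset.mem_toLeft] at ha
      have := hsub ha
      rwa [Finset.inl_mem_disjSum] at this
    · intro b hb
      simp only [Finset.mem_toRight, Finset.mem_toLeft] at hb
      have := hsub hb
      rw [Finset.inr_mem_disjSum, Finset.inl_mem_disjSum] at this
      exact this
    · intro b hb
      simp only [Finset.mem_toRight] at hb
      have := hsub hb
      rw [Finset.inr_mem_disjSum, Finset.inr_mem_disjSum] at this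
      exact this
  · intro x hx
    simp only [Finset.mem_product, Finset.mem_powersetCard] at hx
    obtain ⟨⟨hA, hA'⟩, ⟨hB, hB'⟩, ⟨hC, hC'⟩⟩ := hx
    simp only [Finset.mem_filter, Finset.mem_powersetCard]
    refine ⟨⟨Finset.disjSum_mono hA (Finset.disjSum_mono hB hC), ?_⟩, ?_⟩
    · simp [Finset.card_disjSum, hA', hB', hC', add_assoc]
    · simp [hA', hB', hC']
  · intro S hS
    simp only
    rw [Finset.toLeft_disjSum_toRight, Finset.toLeft_disjSum_toRight]
  · intro x hx
    simp
  · intro S hS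
    simp only

private lemma choose_cast_id {n k : ℕ} (hk : k ≤ n) (hn : 1 ≤ n) :
    ((n : ℝ) - (k : ℝ)) * (n.choose k : ℝ) = (n : ℝ) * ((n - 1).choose k : ℝ) := by
  have h1 : n * (n - 1).choose k = n.choose k * (n - k) := by
    have h := Nat.add_one_mul_choose_eq (n - 1) k
    rw [Nat.sub_add_cancel hn] at h
    rw [h, Nat.choose_succ_right_eq]
  have h2 := congrArg (fun x : ℕ => (x : ℝ)) h1
  push_cast [Nat.cast_sub hk] at h2
  linarith

private lemma univ_sum_eq :
    (univ : Finset (Fin n1 ⊕ Fin n2 ⊕ Fin n3)) =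
      (univ : Finset (Fin n1)).disjSum
        ((univ : Finset (Fin n2)).disjSum (univ : Finset (Fin n3))) := by
  rw [Finset.univ_disjSum_univ, Finset.univ_disjSum_univ]

private lemma erase_inl (i : Fin n1) :
    (univ : Finset (Fin n1 ⊕ Fin n2 ⊕ Fin n3)).erase (Sum.inl i) =
      ((univ : Finset (Fin n1)).erase i).disjSum
        ((univ : Finset (Fin n2)).disjSum (univ : Finset (Fin n3))) := by
  ext x
  cases x with
  | inl a => simp
  | inr b => cases b <;> simp

private lemma U1comb_eq
    (H : Finset (Fin n1) → Finset (Fin n2) → Finset (Fin n3) → ℝ)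
    (h123 : m1 + m2 + m3 ≤ n1 + n2 + n3) :
    U1comb m1 m2 m3 H = U3 m1 m2 m3 H := by
  have hN : (((n1 + n2 + n3).choose (m1 + m2 + m3) : ℕ) : ℝ) ≠ 0 :=
    Nat.cast_ne_zero.mpr (Nat.choose_pos h123).ne'
  rw [U1comb, U3, univ_sum_eq, key]
  field_simp

private lemma ratio_helper (a b c1 c1' c2 c3 T : ℝ) (h : c1' ≠ 0) :
    b⁻¹ * (a / (c1 * c2 * c3) * T) =
      a / b * (c1' / c1) * ((c1' * c2 * c3)⁻¹ * T) := by
  have hcc : c1' * c1'⁻¹ = 1 := mul_inv_cancel₀ h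
  linear_combination (-(a * T * b⁻¹ * c1⁻¹ * c2⁻¹ * c3⁻¹)) * hcc

private lemma U1combDel_eq
    (H : Finset (Fin n1) → Finset (Fin n2) → Finset (Fin n3) → ℝ) (i : Fin n1)
    (h1 : m1 ≤ n1 - 1) :
    U1combDel m1 m2 m3 H (Sum.inl i) =
      (((n1 + n2 + n3).choose (m1 + m2 + m3) : ℕ) : ℝ) /
        (((n1 + n2 + n3 - 1).choose (m1 + m2 + m3) : ℕ) : ℝ) *
      ((((n1 - 1).choose m1 : ℕ) : ℝ) / ((n1.choose m1 : ℕ) : ℝ)) *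
      U3delX m1 m2 m3 H i := by
  have hC1' : (((n1 - 1).choose m1 : ℕ) : ℝ) ≠ 0 :=
    Nat.cast_ne_zero.mpr (Nat.choose_pos h1).ne'
  rw [U1combDel, U3delX, erase_inl, key]
  push_cast
  exact ratio_helper _ _ _ _ _ _ _ hC1'

end AuxPseudo

/-- Decomposition of centered combined pseudo-values in the X-block: for an index `l`
in the X-block (`l = Sum.inl i`), with `n = n1+n2+n3`, `m = m1+m2+m3`,
`V_l = n U_n - (n-1) U_{n-1}^{(-l)}` the combined pseudo-value,
`V_{l,0,0} = n1 U_n - (n1-1) U^{(-l)}_{n1-1,n2,n3}` the X-sample pseudo-value, and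
`E V_l = θ (n/(n-m)) [n - m - (n-1)(n1-m1)/n1]`, one has
`V_l - E V_l = [n(n-1)(n1-m1)/(n1(n-m)(n1-1))] (V_{l,0,0} - U_n)
  + (n/(n-m)) [n - m - (n-1)(n1-m1)/n1] (U_n - θ)`. -/
theorem centered_pseudo_value_decomposition_X {n1 n2 n3 m1 m2 m3 : ℕ}
    (h1 : m1 < n1) (h2 : m2 ≤ n2) (h3 : m3 ≤ n3) (hm1 : 1 ≤ m1)
    (hmn : m1 + m2 + m3 < n1 + n2 + n3)
    (H : Finset (Fin n1) → Finset (Fin n2) → Finset (Fin n3) → ℝ)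
    (θ : ℝ) (i : Fin n1) :
    (((n1 + n2 + n3 : ℕ) : ℝ) * U1comb m1 m2 m3 H -
        (((n1 + n2 + n3 : ℕ) : ℝ) - 1) * U1combDel m1 m2 m3 H (Sum.inl i)) -
      θ * (((n1 + n2 + n3 : ℕ) : ℝ) /
            (((n1 + n2 + n3 : ℕ) : ℝ) - ((m1 + m2 + m3 : ℕ) : ℝ))) *
          ((((n1 + n2 + n3 : ℕ) : ℝ) - ((m1 + m2 + m3 : ℕ) : ℝ)) -
            ((((n1 + n2 + n3 : ℕ) : ℝ) - 1) * ((n1 : ℝ) - (m1 : ℝ))) / (n1 : ℝ)) =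
    (((n1 + n2 + n3 : ℕ) : ℝ) * (((n1 + n2 + n3 : ℕ) : ℝ) - 1) * ((n1 : ℝ) - (m1 : ℝ))) /
        ((n1 : ℝ) * (((n1 + n2 + n3 : ℕ) : ℝ) - ((m1 + m2 + m3 : ℕ) : ℝ)) *
          ((n1 : ℝ) - 1)) *
        (((n1 : ℝ) * U3 m1 m2 m3 H - ((n1 : ℝ) - 1) * U3delX m1 m2 m3 H i) -
          U3 m1 m2 m3 H) +
      (((n1 + n2 + n3 : ℕ) : ℝ) /
            (((n1 + n2 + n3 : ℕ) : ℝ) - ((m1 + m2 + m3 : ℕ) : ℝ))) *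
          ((((n1 + n2 + n3 : ℕ) : ℝ) - ((m1 + m2 + m3 : ℕ) : ℝ)) -
            ((((n1 + n2 + n3 : ℕ) : ℝ) - 1) * ((n1 : ℝ) - (m1 : ℝ))) / (n1 : ℝ)) *
        (U3 m1 m2 m3 H - θ) := by
  classical
  set n : ℕ := n1 + n2 + n3 with hn
  set m : ℕ := m1 + m2 + m3 with hm
  have hmn' : m ≤ n := le_of_lt hmn
  have hn1pos : (0:ℝ) < (n1:ℝ) := by
    have : 0 < n1 := lt_of_le_of_lt (Nat.zero_le m1) h1
    exact_mod_cast this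
  have hn1ne : (n1:ℝ) ≠ 0 := ne_of_gt hn1pos
  have hn1one : (n1:ℝ) - 1 ≠ 0 := by
    have : 2 ≤ n1 := by omega
    have : (2:ℝ) ≤ (n1:ℝ) := by exact_mod_cast this
    linarith
  have hnm : (n:ℝ) - (m:ℝ) ≠ 0 := by
    have : (m:ℝ) < (n:ℝ) := by exact_mod_cast hmn
    linarith
  have hCn : ((n.choose m : ℕ) : ℝ) ≠ 0 := Nat.cast_ne_zero.mpr (Nat.choose_pos hmn').ne'
  have hCn' : (((n - 1).choose m : ℕ) : ℝ) ≠ 0 :=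
    Nat.cast_ne_zero.mpr (Nat.choose_pos (by omega)).ne'
  have hC1 : ((n1.choose m1 : ℕ) : ℝ) ≠ 0 := Nat.cast_ne_zero.mpr (Nat.choose_pos h1.le).ne'
  have hC1' : (((n1 - 1).choose m1 : ℕ) : ℝ) ≠ 0 :=
    Nat.cast_ne_zero.mpr (Nat.choose_pos (by omega)).ne'
  have e1 : ((n:ℝ) - (m:ℝ)) * (n.choose m : ℝ) = (n:ℝ) * ((n - 1).choose m : ℝ) :=
    choose_cast_id hmn' (by omega)
  have e2 : ((n1:ℝ) - (m1:ℝ)) * (n1.choose m1 : ℝ) = (n1:ℝ) * ((n1 - 1).choose m1 : ℝ) :=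
    choose_cast_id h1.le (by omega)
  have hc : U1comb m1 m2 m3 H = U3 m1 m2 m3 H := U1comb_eq H hmn'
  have hd := U1combDel_eq (m1 := m1) (m2 := m2) (m3 := m3) H i (by omega)
  have hratio : ((n.choose m : ℕ) : ℝ) / (((n - 1).choose m : ℕ) : ℝ) *
      ((((n1 - 1).choose m1 : ℕ) : ℝ) / ((n1.choose m1 : ℕ) : ℝ)) =
      (n:ℝ) * ((n1:ℝ) - (m1:ℝ)) / (((n:ℝ) - (m:ℝ)) * (n1:ℝ)) := by
    rw [div_mul_div_comm, div_eq_div_iff (by positivity) (by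
      exact mul_ne_zero hnm hn1ne)]
    linear_combination ((n1:ℝ) * (((n1 - 1).choose m1 : ℕ) : ℝ)) * e1 -
      ((n:ℝ) * (((n - 1).choose m : ℕ) : ℝ)) * e2
  rw [hratio] at hd
  rw [hc, hd]
  set U : ℝ := U3 m1 m2 m3 H
  set D : ℝ := U3delX m1 m2 m3 H i
  field_simp
  ring
end

section
/- If min_{1≤i≤n}(V_i − E V_i) < 0 < max_{1≤i≤n}(V_i − E V_i), then the Lagrange equation (1/n)·Σ_{i=1}^n (V_i − E V_i)/(1 + λ(V_i − E V_i)) = 0 has a unique solution λ in the open interval on which all factors 1 + λ(V_i − E V_i) are strictly positive, namely (−1/max_i(V_i − E V_i), −1/min_i(V_i − E V_i)). -/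
open Finset

set_option maxHeartbeats 1600000

/-- The maximum of the centered pseudo-values `d_i = V_i - E V_i`. -/
noncomputable def dMax {n : ℕ} (hn : 0 < n) (d : Fin n → ℝ) : ℝ :=
  Finset.univ.sup' (Finset.univ_nonempty_iff.mpr (Fin.pos_iff_nonempty.mp hn)) d

/-- The minimum of the centered pseudo-values `d_i = V_i - E V_i`. -/
noncomputable def dMin {n : ℕ} (hn : 0 < n) (d : Fin n → ℝ) : ℝ :=
  Finset.univ.inf' (Finset.univ_nonempty_iff.mpr (Fin.pos_iff_nonempty.mp hn)) d

/-- If `min_i (V_i - E V_i) < 0 < max_i (V_i - E V_i)`, then on the open interval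
`(-1/max_i (V_i - E V_i), -1/min_i (V_i - E V_i))` all factors `1 + λ (V_i - E V_i)` are
strictly positive, and the Lagrange equation
`(1/n) Σ_i (V_i - E V_i)/(1 + λ (V_i - E V_i)) = 0` has a unique solution `λ` in this
interval. -/
theorem lagrange_equation_unique_solution {n : ℕ} (hn : 0 < n)
    (V EV : Fin n → ℝ)
    (hmin : dMin hn (fun i => V i - EV i) < 0)
    (hmax : 0 < dMax hn (fun i => V i - EV i)) :
    (∀ l ∈ Set.Ioo (-(dMax hn (fun i => V i - EV i))⁻¹)
        (-(dMin hn (fun i => V i - EV i))⁻¹),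
      ∀ i, 0 < 1 + l * (V i - EV i)) ∧
    (∃! l : ℝ,
      l ∈ Set.Ioo (-(dMax hn (fun i => V i - EV i))⁻¹)
          (-(dMin hn (fun i => V i - EV i))⁻¹) ∧
        (n : ℝ)⁻¹ * ∑ i, (V i - EV i) / (1 + l * (V i - EV i)) = 0) := by
  have hne : (Finset.univ : Finset (Fin n)).Nonempty :=
    Finset.univ_nonempty_iff.mpr (Fin.pos_iff_nonempty.mp hn)
  set d : Fin n → ℝ := fun i => V i - EV i with hd
  have hd' : ∀ i, V i - EV i = d i := fun i => rfl
  simp only [hd']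
  set M := dMax hn d with hM
  set m := dMin hn d with hm'
  have hMpos : 0 < M := hmax
  have hmneg : m < 0 := hmin
  have hdM : ∀ i, d i ≤ M := fun i => Finset.le_sup' d (Finset.mem_univ i)
  have hmd : ∀ i, m ≤ d i := fun i => Finset.inf'_le d (Finset.mem_univ i)
  obtain ⟨i₀, -, hi₀⟩ := Finset.exists_mem_eq_sup' hne d
  obtain ⟨i₁, -, hi₁⟩ := Finset.exists_mem_eq_inf' hne d
  have hMi₀ : M = d i₀ := hi₀
  have hmi₁ : m = d i₁ := hi₁
  clear_value d M m
  have hMinv : 0 < M⁻¹ := inv_pos.mpr hMpos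
  have hminvneg : m⁻¹ < 0 := inv_lt_zero.mpr hmneg
  have hminv : 0 < -m⁻¹ := by linarith
  have hMM : M⁻¹ * M = 1 := inv_mul_cancel₀ hMpos.ne'
  have hmm : m⁻¹ * m = 1 := inv_mul_cancel₀ hmneg.ne
  -- positivity of the factors on the interval
  have hpos : ∀ l ∈ Set.Ioo (-M⁻¹) (-m⁻¹), ∀ i, 0 < 1 + l * d i := by
    intro l hl i
    obtain ⟨hl1, hl2⟩ := hl
    rcases lt_trichotomy (d i) 0 with h | h | h
    · have A : (-m⁻¹) * d i < l * d i := mul_lt_mul_of_neg_right hl2 h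
      have B : m⁻¹ * d i ≤ m⁻¹ * m :=
        mul_le_mul_of_nonpos_left (hmd i) hminvneg.le
      nlinarith
    · rw [h]; norm_num
    · have A : (-M⁻¹) * d i < l * d i := mul_lt_mul_of_pos_right hl1 h
      have B : M⁻¹ * d i ≤ M⁻¹ * M :=
        mul_le_mul_of_nonneg_left (hdM i) hMinv.le
      nlinarith
  -- the function whose zero we seek
  set f : ℝ → ℝ := fun l => ∑ i, d i / (1 + l * d i) with hf
  have hfeq : ∀ l, f l = ∑ i, d i / (1 + l * d i) := fun l => rfl
  clear_value f
  -- strict antitonicity on the interval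
  have hanti : ∀ a ∈ Set.Ioo (-M⁻¹) (-m⁻¹), ∀ b ∈ Set.Ioo (-M⁻¹) (-m⁻¹),
      a < b → f b < f a := by
    intro a ha b hb hab
    simp only [hfeq]
    apply Finset.sum_lt_sum
    · intro i _
      have h1 := hpos a ha i
      have h2 := hpos b hb i
      rw [div_le_div_iff₀ h2 h1]
      nlinarith [mul_le_mul_of_nonneg_right hab.le (sq_nonneg (d i))]
    · refine ⟨i₀, Finset.mem_univ _, ?_⟩
      have h1 := hpos a ha i₀
      have h2 := hpos b hb i₀
      rw [div_lt_div_iff₀ h2 h1]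
      have hdi₀ : 0 < d i₀ := hMi₀ ▸ hMpos
      nlinarith [mul_pos (mul_pos hdi₀ hdi₀) (sub_pos.mpr hab)]
  -- the total absolute mass
  set S := ∑ i, |d i| with hS
  have hS0 : 0 ≤ S := Finset.sum_nonneg fun i _ => abs_nonneg _
  have herase_le : ∀ j : Fin n, ∑ i ∈ Finset.univ.erase j, |d i| ≤ S := by
    intro j
    exact Finset.sum_le_sum_of_subset_of_nonneg (Finset.subset_univ _)
      (fun i _ _ => abs_nonneg _)
  clear_value S
  have hS1pos : (0:ℝ) < S + 1 := by linarith
  -- a point near the left endpoint where f is large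
  set ε := min (M⁻¹ / 2) (1 / (S + 1)) with hε
  have hε0 : 0 < ε := lt_min (by linarith) (by positivity)
  have hε1 : ε ≤ M⁻¹ / 2 := min_le_left _ _
  have hε2 : ε ≤ 1 / (S + 1) := min_le_right _ _
  clear_value ε
  have hεinv : S + 1 ≤ ε⁻¹ := by
    have hεS : ε * (S + 1) ≤ 1 := by
      calc ε * (S + 1) ≤ (1 / (S + 1)) * (S + 1) :=
            mul_le_mul_of_nonneg_right hε2 hS1pos.le
        _ = 1 := by field_simp
    have h := mul_le_mul_of_nonneg_left hεS (inv_nonneg.mpr hε0.le)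
    rw [← mul_assoc, inv_mul_cancel₀ hε0.ne'] at h
    linarith
  set a := -M⁻¹ + ε with haa
  clear_value a
  have haneg : a < 0 := by linarith
  have ha_mem : a ∈ Set.Ioo (-M⁻¹) (-m⁻¹) := ⟨by linarith, by linarith⟩
  -- a point near the right endpoint where f is small
  set ε' := min (-m⁻¹ / 2) (1 / (S + 1)) with hε'
  have hε'0 : 0 < ε' := lt_min (by linarith) (by positivity)
  have hε'1 : ε' ≤ -m⁻¹ / 2 := min_le_left _ _
  have hε'2 : ε' ≤ 1 / (S + 1) := min_le_right _ _
  clear_value ε'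
  have hε'inv : S + 1 ≤ ε'⁻¹ := by
    have hεS : ε' * (S + 1) ≤ 1 := by
      calc ε' * (S + 1) ≤ (1 / (S + 1)) * (S + 1) :=
            mul_le_mul_of_nonneg_right hε'2 hS1pos.le
        _ = 1 := by field_simp
    have h := mul_le_mul_of_nonneg_left hεS (inv_nonneg.mpr hε'0.le)
    rw [← mul_assoc, inv_mul_cancel₀ hε'0.ne'] at h
    linarith
  set b := -m⁻¹ - ε' with hbb
  clear_value b
  have hbpos : 0 < b := by linarith
  have hb_mem : b ∈ Set.Ioo (-M⁻¹) (-m⁻¹) := ⟨by linarith, by linarith⟩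
  have habl : a < b := lt_trans haneg hbpos
  -- f a ≥ 1
  have hfa : (1:ℝ) ≤ f a := by
    rw [hfeq]
    have hsplit : d i₀ / (1 + a * d i₀) + ∑ i ∈ Finset.univ.erase i₀, d i / (1 + a * d i)
        = ∑ i, d i / (1 + a * d i) :=
      Finset.add_sum_erase _ (fun i => d i / (1 + a * d i)) (Finset.mem_univ i₀)
    have hdenom : 1 + a * d i₀ = ε * M := by
      rw [← hMi₀]; rw [haa]; linear_combination -hMM
    have hterm0 : d i₀ / (1 + a * d i₀) = ε⁻¹ := by
      rw [hdenom, ← hMi₀]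
      field_simp
    have hrest : -S ≤ ∑ i ∈ Finset.univ.erase i₀, d i / (1 + a * d i) := by
      have h1 : ∑ i ∈ Finset.univ.erase i₀, -|d i|
          ≤ ∑ i ∈ Finset.univ.erase i₀, d i / (1 + a * d i) := by
        apply Finset.sum_le_sum
        intro i _
        have hpo := hpos a ha_mem i
        rcases le_or_gt 0 (d i) with h | h
        · have h2 : 0 ≤ d i / (1 + a * d i) := div_nonneg h hpo.le
          have h3 := abs_nonneg (d i)
          linarith
        · have hd1 : (1:ℝ) ≤ 1 + a * d i := by nlinarith [mul_pos_of_neg_of_neg haneg h]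
          have h2 : d i ≤ d i / (1 + a * d i) := by
            rw [le_div_iff₀ hpo]; nlinarith
          have h3 : |d i| = -(d i) := abs_of_neg h
          linarith
      have h2 : ∑ i ∈ Finset.univ.erase i₀, -|d i|
          = -∑ i ∈ Finset.univ.erase i₀, |d i| := by
        rw [Finset.sum_neg_distrib]
      have := herase_le i₀
      linarith
    rw [← hsplit, hterm0]
    linarith
  -- f b ≤ -1
  have hfb : f b ≤ -1 := by
    rw [hfeq]
    have hsplit : d i₁ / (1 + b * d i₁) + ∑ i ∈ Finset.univ.erase i₁, d i / (1 + b * d i)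
        = ∑ i, d i / (1 + b * d i) :=
      Finset.add_sum_erase _ (fun i => d i / (1 + b * d i)) (Finset.mem_univ i₁)
    have hdenom : 1 + b * d i₁ = ε' * (-m) := by
      rw [← hmi₁]; rw [hbb]; linear_combination -hmm
    have hterm0 : d i₁ / (1 + b * d i₁) = -ε'⁻¹ := by
      rw [hdenom, ← hmi₁]
      rw [div_eq_iff (ne_of_gt (mul_pos hε'0 (neg_pos.mpr hmneg)))]
      field_simp
    have hrest : ∑ i ∈ Finset.univ.erase i₁, d i / (1 + b * d i) ≤ S := by
      have h1 : ∑ i ∈ Finset.univ.erase i₁, d i / (1 + b * d i)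
          ≤ ∑ i ∈ Finset.univ.erase i₁, |d i| := by
        apply Finset.sum_le_sum
        intro i _
        have hpo := hpos b hb_mem i
        rcases le_or_gt (d i) 0 with h | h
        · have h2 : d i / (1 + b * d i) ≤ 0 := div_nonpos_of_nonpos_of_nonneg h hpo.le
          have h3 := abs_nonneg (d i)
          linarith
        · have hd1 : (1:ℝ) ≤ 1 + b * d i := by nlinarith [mul_pos hbpos h]
          have h2 : d i / (1 + b * d i) ≤ d i := by
            rw [div_le_iff₀ hpo]; nlinarith
          have h3 : |d i| = d i := abs_of_pos h
          linarith
      have := herase_le i₁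
      linarith
    rw [← hsplit, hterm0]
    linarith
  -- continuity and IVT
  have hsub : Set.Icc a b ⊆ Set.Ioo (-M⁻¹) (-m⁻¹) := fun x hx =>
    ⟨lt_of_lt_of_le ha_mem.1 hx.1, lt_of_le_of_lt hx.2 hb_mem.2⟩
  have hcont : ContinuousOn f (Set.Icc a b) := by
    rw [hf]
    apply continuousOn_finset_sum
    intro i _
    apply ContinuousOn.div continuousOn_const
    · exact (continuous_const.add (continuous_id.mul continuous_const)).continuousOn
    · intro x hx
      exact (hpos x (hsub hx) i).ne'
  obtain ⟨c, hc, hfc⟩ := intermediate_value_Icc' habl.le hcont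
    (⟨by linarith, by linarith⟩ : (0:ℝ) ∈ Set.Icc (f b) (f a))
  have hcmem : c ∈ Set.Ioo (-M⁻¹) (-m⁻¹) := hsub hc
  have hn0 : ((n:ℝ))⁻¹ ≠ 0 := inv_ne_zero (Nat.cast_ne_zero.mpr hn.ne')
  refine ⟨hpos, c, ⟨hcmem, ?_⟩, ?_⟩
  · rw [← hfeq c, hfc, mul_zero]
  · rintro l ⟨hlmem, hleq⟩
    have hfl : f l = 0 := by
      have h : (n : ℝ)⁻¹ * f l = 0 := by rw [hfeq]; exact hleq
      rcases mul_eq_zero.mp h with h | h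
      · exact absurd h hn0
      · exact h
    rcases lt_trichotomy l c with h | h | h
    · have := hanti l hlmem c hcmem h
      rw [hfl, hfc] at this
      exact absurd this (lt_irrefl 0)
    · exact h
    · have := hanti c hcmem l hlmem h
      rw [hfl, hfc] at this
      exact absurd this (lt_irrefl 0)
end
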